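/- Let A = [[1,1],[2,0]] (period doubling) and G := {v ∈ ℚ² : Aⁿ v ∈ ℤ² for some n ∈ ℕ}. There is no additive group homomorphism s : G → ℤ with s(1, −2) = 1. Equivalently, the injection ψ : ℤ → G, ψ(k) = k·(1, −2), admits no retraction, so the short exact sequence 0 → ℤ → G → G/ψ(ℤ) → 0 does not split. -/

import Mathlib

/-!
The vector `(1,1)` is an eigenvector of `A = [[1,1],[2,0]]` for the eigenvalue `2`. Hence every
`2⁻ⁿ • (1,1)` lies in `G`, so `(1,1)` is divisible by every power of `2` in `G` and any
homomorphism `s : G →+ ℤ` kills it. But `3 • (1,0) = 2 • (1,1) + (1,-2)`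
in `G`, so `s (1,-2) = 1` would force `3 ∣ 1`.
-/

open Matrix

theorem Matrix.pow_mulVec_of_mulVec_eq_smul {n R : Type*} [Fintype n] [DecidableEq n]
    [CommSemiring R] {A : Matrix n n R} {v : n → R} {c : R} (h : A *ᵥ v = c • v) (k : ℕ) :
    (A ^ k) *ᵥ v = c ^ k • v := by
  induction k with
  | zero => simp
  | succ k ih => rw [pow_succ, ← mulVec_mulVec, h, mulVec_smul, ih, smul_smul, pow_succ']

theorem AddMonoidHom.map_eq_zero_of_forall_two_pow_nsmul_eq {M : Type*} [AddCommGroup M]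
    (f : M →+ ℤ) {x : M} (hx : ∀ n : ℕ, ∃ y, 2 ^ n • y = x) : f x = 0 := by
  set N := (f x).natAbs with hN
  obtain ⟨y, hy⟩ := hx N
  have hdvd : (2 : ℤ) ^ N ∣ f x := ⟨f y, by
    rw [← hy, map_nsmul, nsmul_eq_mul, Nat.cast_pow, Nat.cast_ofNat]⟩
  refine Int.eq_zero_of_abs_lt_dvd hdvd ?_
  rw [Int.abs_eq_natAbs, ← hN]
  exact_mod_cast Nat.lt_two_pow_self

theorem mem_of_pow_mulVec_eq_intCast {ι : Type*} [Fintype ι] [DecidableEq ι]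
    {G : AddSubgroup (ι → ℚ)} {A : Matrix ι ι ℚ}
    (hG : (G : Set (ι → ℚ)) = {v | ∃ n : ℕ, ∀ i, ∃ z : ℤ, (A ^ n).mulVec v i = (z : ℚ)})
    {v : ι → ℚ} (n : ℕ) (z : ι → ℤ) (h : (A ^ n) *ᵥ v = fun i => (z i : ℚ)) : v ∈ G := by
  change v ∈ (G : Set (ι → ℚ))
  rw [hG]
  exact ⟨n, fun i => ⟨z i, by rw [h]⟩⟩

/-- Let `A = [[1,1],[2,0]]` (period doubling) and `G = {v ∈ ℚ² : Aⁿ v ∈ ℤ² for some n}`.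
There is no additive group homomorphism `s : G → ℤ` with `s(1, −2) = 1`; i.e. the
injection `ψ : ℤ → G`, `ψ(k) = k·(1, −2)`, admits no retraction, so the short exact
sequence `0 → ℤ → G → G/ψ(ℤ) → 0` does not split. -/
theorem stmt17 (G : AddSubgroup (Fin 2 → ℚ))
    (hG : (G : Set (Fin 2 → ℚ)) =
      {v | ∃ n : ℕ, ∀ i, ∃ z : ℤ, ((!![(1 : ℚ), 1; 2, 0]) ^ n).mulVec v i = (z : ℚ)})
    (hmem : ![(1 : ℚ), -2] ∈ G) :
    ¬ ∃ s : G →+ ℤ, s ⟨![(1 : ℚ), -2], hmem⟩ = 1 := by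
  rintro ⟨s, hs⟩
  have eigen : !![(1 : ℚ), 1; 2, 0] *ᵥ ![1, 1] = (2 : ℚ) • ![1, 1] := by
    ext i; fin_cases i <;> norm_num
  have hu (n : ℕ) : ((2 : ℚ) ^ n)⁻¹ • ![1, 1] ∈ G := by
    refine mem_of_pow_mulVec_eq_intCast hG n ![1, 1] ?_
    rw [mulVec_smul, pow_mulVec_of_mulVec_eq_smul eigen, smul_smul,
      inv_mul_cancel₀ (by positivity), one_smul]
    ext i; fin_cases i <;> simp
  have he : ![(1 : ℚ), 0] ∈ G :=
    mem_of_pow_mulVec_eq_intCast hG 0 ![1, 0] (by ext i; fin_cases i <;> simp)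
  let u (n : ℕ) : G := ⟨_, hu n⟩
  have hs_u : s (u 0) = 0 := s.map_eq_zero_of_forall_two_pow_nsmul_eq fun n =>
    ⟨u n, Subtype.ext <| by simp [u]⟩
  have decomp : 3 • (⟨_, he⟩ : G) = 2 • u 0 + ⟨![1, -2], hmem⟩ :=
    Subtype.ext <| by ext i; fin_cases i <;> norm_num [u]
  have h3 := congrArg s decomp
  rw [map_nsmul, map_add, map_nsmul, hs_u, hs] at h3
  simp only [nsmul_eq_mul, Nat.cast_ofNat, smul_zero, zero_add] at h3
  omega
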